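/- Let u^ν be a smooth solution of 2D Navier–Stokes on T^2 satisfying the energy identity (d/dt)||u^ν||_{L^2}^2 = −2ν||ω^ν||_{L^2}^2, and suppose ||ω^ν(t)||_{L^2}^2 ≤ (2ν p C_0 t/(2−p))^{−(2−p)/p} for all t > 0 with 1 < p < 2 and C_0 = ||ω_0^ν||_{L^p}^{−2p/(2−p)}. Then 0 ≤ ||u_0^ν||_{L^2}^2 − ||u^ν(t)||_{L^2}^2 ≤ C_p ν^{2(p−1)/p} t^{2(p−1)/p} ||ω_0^ν||_{L^p}^2, where C_p depends only on p. -/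

import Mathlib

open MeasureTheory
open scoped Real

noncomputable section

/-- Fundamental domain `[0,2π]²` of the torus. -/
def Q : Set (ℝ × ℝ) := Set.Icc (0, 0) (2 * π, 2 * π)

/-- Vanishing of the viscous energy loss: if the energy identity
`(d/dt)‖u^ν‖² = -2ν‖ω^ν‖²` holds and the enstrophy obeys the decay bound
`‖ω^ν(t)‖² ≤ (2νpC₀t/(2-p))^{-(2-p)/p}` with `C₀ = ‖ω₀^ν‖_{L^p}^{-2p/(2-p)}`,
`1 < p < 2`, then
`0 ≤ ‖u₀^ν‖² - ‖u^ν(t)‖² ≤ C_p ν^{2(p-1)/p} t^{2(p-1)/p} ‖ω₀^ν‖_{L^p}²`,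
where `C_p` depends only on `p`. -/
theorem stmt15 (p : ℝ) (hp : 1 < p) (hp2 : p < 2) :
    ∃ C > (0:ℝ), ∀ (ν : ℝ), 0 < ν →
      ∀ (u : ℝ → ℝ × ℝ → ℝ × ℝ) (ω : ℝ → ℝ × ℝ → ℝ),
      ContDiff ℝ (⊤ : ℕ∞) (Function.uncurry u) →
      ContDiff ℝ (⊤ : ℕ∞) (Function.uncurry ω) →
      (∀ t, ∀ x : ℝ × ℝ, u t (x.1 + 2 * π, x.2) = u t x ∧ u t (x.1, x.2 + 2 * π) = u t x) →
      (∀ t, ∀ x : ℝ × ℝ, ω t (x.1 + 2 * π, x.2) = ω t x ∧ ω t (x.1, x.2 + 2 * π) = ω t x) →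
      -- energy identity (d/dt)‖u‖² = -2ν‖ω‖²
      (∀ t : ℝ, 0 ≤ t →
        HasDerivAt (fun s => ∫ x in Q, ((u s x).1 ^ 2 + (u s x).2 ^ 2))
          (-(2 * ν) * ∫ x in Q, (ω t x) ^ 2) t) →
      -- enstrophy decay bound
      (∀ t : ℝ, 0 < t →
        (∫ x in Q, (ω t x) ^ 2) ≤
          ((2 * ν * p * (((∫ x in Q, |ω 0 x| ^ p) ^ (1/p)) ^ (-(2 * p) / (2 - p))) * t)
              / (2 - p)) ^ (-(2 - p) / p)) →
      ∀ t : ℝ, 0 ≤ t →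
        0 ≤ (∫ x in Q, ((u 0 x).1 ^ 2 + (u 0 x).2 ^ 2))
              - (∫ x in Q, ((u t x).1 ^ 2 + (u t x).2 ^ 2)) ∧
        (∫ x in Q, ((u 0 x).1 ^ 2 + (u 0 x).2 ^ 2))
            - (∫ x in Q, ((u t x).1 ^ 2 + (u t x).2 ^ 2))
          ≤ C * ν ^ (2 * (p - 1) / p) * t ^ (2 * (p - 1) / p)
              * ((∫ x in Q, |ω 0 x| ^ p) ^ (1/p)) ^ 2 := by
  have hp0 : 0 < p := lt_trans one_pos hp
  have h2p : 0 < 2 - p := by linarith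
  set α : ℝ := 2 * (p - 1) / p with hα
  set β : ℝ := (2 - p) / p with hβ
  have hα_pos : 0 < α := by
    apply div_pos <;> nlinarith
  have hβ_pos : 0 < β := div_pos h2p hp0
  have hαβ : α = 1 - β := by rw [hα, hβ]; field_simp; ring
  refine ⟨2 ^ α * (p / (2 - p)) ^ (-β) / α, ?_, ?_⟩
  · apply div_pos _ hα_pos
    exact mul_pos (Real.rpow_pos_of_pos two_pos _)
      (Real.rpow_pos_of_pos (div_pos hp0 h2p) _)
  intro ν hν u ω _ _ _ _ hE hW t ht
  set E : ℝ → ℝ := fun s => ∫ x in Q, ((u s x).1 ^ 2 + (u s x).2 ^ 2) with hEdef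
  set F : ℝ → ℝ := fun s => ∫ x in Q, (ω s x) ^ 2 with hFdef
  set M : ℝ := (∫ x in Q, |ω 0 x| ^ p) ^ (1/p) with hM
  have hM0 : 0 ≤ M := Real.rpow_nonneg (integral_nonneg fun x => by positivity) _
  set C₀ : ℝ := M ^ (-(2 * p) / (2 - p)) with hC₀
  have hC₀0 : 0 ≤ C₀ := Real.rpow_nonneg hM0 _
  set D : ℝ := 2 * ν * p * C₀ / (2 - p) with hD
  have hD0 : 0 ≤ D := by
    apply div_nonneg _ h2p.le
    positivity
  have hF0 : ∀ s, 0 ≤ F s := fun s => integral_nonneg fun x => sq_nonneg _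
  -- key constant A
  set A : ℝ := 2 * ν * D ^ (-β) / α with hA
  have hA0 : 0 ≤ A := by
    apply div_nonneg _ hα_pos.le
    have := Real.rpow_nonneg hD0 (-β)
    nlinarith
  rcases eq_or_lt_of_le ht with rfl | htpos
  · constructor
    · simp
    · have : (0:ℝ) ^ α = 0 := Real.zero_rpow hα_pos.ne'
      rw [sub_self, this]
      ring_nf
      positivity
  -- case 0 < t
  have hEcont : ContinuousOn E (Set.Icc 0 t) := fun s hs =>
    ((hE s hs.1).continuousAt).continuousWithinAt
  have hint : interior (Set.Icc (0:ℝ) t) = Set.Ioo 0 t := interior_Icc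
  -- Part 1: E is antitone on [0,t]
  have hanti : AntitoneOn E (Set.Icc 0 t) := by
    apply antitoneOn_of_hasDerivWithinAt_nonpos (f' := fun s => -(2 * ν) * F s)
      (convex_Icc 0 t) hEcont
    · intro s hs
      rw [hint] at hs
      exact (hE s hs.1.le).hasDerivWithinAt
    · intro s hs
      have := hF0 s
      nlinarith
  have part1 : 0 ≤ E 0 - E t := by
    have := hanti (Set.left_mem_Icc.2 ht) (Set.right_mem_Icc.2 ht) ht
    linarith
  refine ⟨part1, ?_⟩
  -- Part 2: φ = E + A * s^α is monotone on [0,t]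
  set φ : ℝ → ℝ := fun s => E s + A * s ^ α with hφ
  have hmono : MonotoneOn φ (Set.Icc 0 t) := by
    apply monotoneOn_of_hasDerivWithinAt_nonneg
      (f' := fun s => -(2 * ν) * F s + A * (α * s ^ (α - 1)))
      (convex_Icc 0 t)
    · apply hEcont.add
      apply ContinuousOn.mul continuousOn_const
      intro s hs
      exact (Real.continuousAt_rpow_const s α (Or.inr hα_pos.le)).continuousWithinAt
    · intro s hs
      rw [hint] at hs
      exact (((hE s hs.1.le).add
        (((Real.hasDerivAt_rpow_const (Or.inl hs.1.ne')).const_mul A)))).hasDerivWithinAt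
    · intro s hs
      rw [hint] at hs
      have hs0 : 0 < s := hs.1
      -- enstrophy bound at s
      have hb := hW s hs0
      have hbe : -(2 - p) / p = -β := by rw [hβ]; ring
      rw [hbe] at hb
      have hDs : (2 * ν * p * C₀ * s) / (2 - p) = D * s := by
        rw [hD]; ring
      rw [hDs] at hb
      have hsplit : (D * s) ^ (-β) = D ^ (-β) * s ^ (-β) :=
        Real.mul_rpow hD0 hs0.le
      rw [hsplit] at hb
      have hexp : s ^ (α - 1) = s ^ (-β) := by
        rw [hαβ]; ring_nf
      rw [hexp]
      have hAα : A * α = 2 * ν * D ^ (-β) := by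
        rw [hA]; field_simp
      have hspos : 0 < s ^ (-β) := Real.rpow_pos_of_pos hs0 _
      have : F s ≤ D ^ (-β) * s ^ (-β) := hb
      nlinarith
  have hφle : φ 0 ≤ φ t :=
    hmono (Set.left_mem_Icc.2 ht) (Set.right_mem_Icc.2 ht) ht
  have h0α : (0:ℝ) ^ α = 0 := Real.zero_rpow hα_pos.ne'
  have part2 : E 0 - E t ≤ A * t ^ α := by
    rw [hφ] at hφle
    simp only [h0α, mul_zero, add_zero] at hφle
    linarith
  refine part2.trans (le_of_eq ?_)
  -- Now the algebra: A * t^α = C * ν^α * t^α * M^2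
  have hC₀β : C₀ ^ (-β) = M ^ 2 := by
    rw [hC₀, ← Real.rpow_natCast M 2, ← Real.rpow_mul hM0]
    congr 1
    rw [hβ]
    field_simp
    ring
  have hDfact : D = (2 * ν) * (p / (2 - p)) * C₀ := by rw [hD]; ring
  have hDβ : D ^ (-β) = (2 * ν) ^ (-β) * (p / (2 - p)) ^ (-β) * M ^ 2 := by
    rw [hDfact, Real.mul_rpow (by positivity) hC₀0,
      Real.mul_rpow (by positivity) (by positivity), hC₀β]
  have h2ν : 2 * ν * (2 * ν) ^ (-β) = 2 ^ α * ν ^ α := by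
    have : (2 * ν) ^ α = 2 * ν * (2 * ν) ^ (-β) := by
      rw [hαβ, sub_eq_add_neg, Real.rpow_add (by positivity), Real.rpow_one]
    rw [← this, Real.mul_rpow (by norm_num) hν.le]
  rw [hA, hDβ]
  have hαne : α ≠ 0 := hα_pos.ne'
  field_simp
  linear_combination M ^ 2 * h2ν
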